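/- arXiv:1902.07784 — 2 statements merged into one kernel-verified Lean document; each statement's English description precedes it below -/
import Mathlib

section
/- Let R be a finite set with a laminar family Σ of subsets (any two members disjoint or nested) containing R, and suppose nonnegative integers γ(S) are assigned to all S ∈ Σ such that: γ(S) ≤ ⌊(|S|-1)/2⌋ for all S, γ(R) = g where |R| ∈ {2g+1, 2g+2}, and γ(S') ≥ Σ_{T child of S'} γ(T) for all S'. If additionally whenever γ(S) < ⌊(|S|-1)/2⌋ for some S ≠ R with parent S', one has γ(S') = Σ_{T child of S'} γ(T), then γ(S) = ⌊(|S|-1)/2⌋ for all S ∈ Σ. -/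
/-!
Descend from the root `R`, where `γ R = g = ⌊(|R|-1)/2⌋`. If some `S ≠ R` had
`γ S < ⌊(|S|-1)/2⌋`, then for its parent `S'` the hypothesis gives
`γ S' = ∑ γ T < ∑ ⌊(|T|-1)/2⌋ ≤ ⌊(|S'|-1)/2⌋`, the sums running over the children `T` of `S'`;
the last step holds because the children are disjoint subsets of `S'`. So the defect
propagates to the parent, contradicting what is already known there.
-/

open Finset

lemma Finset.sum_half_pred_le {ι : Type*} (s : Finset ι) (f : ι → ℕ) :
    ∑ i ∈ s, (f i - 1) / 2 ≤ (∑ i ∈ s, f i - 1) / 2 := by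
  classical
  induction s using Finset.induction_on with
  | empty => simp
  | insert a s ha ih =>
    rw [sum_insert ha, sum_insert ha]
    omega

section Laminar

variable {α : Type*}

def IsLaminar (Sig : Finset (Finset α)) : Prop :=
  ∀ S ∈ Sig, ∀ T ∈ Sig, Disjoint S T ∨ S ⊆ T ∨ T ⊆ S

variable {R : Finset α} {Sig : Finset (Finset α)} {parent : Finset α → Finset α}

lemma induction_from_root {P : Finset α → Prop}
    (hsub : ∀ S ∈ Sig, S ⊆ R)
    (hpar_mem : ∀ S ∈ Sig, S ≠ R → parent S ∈ Sig)
    (hpar_ssub : ∀ S ∈ Sig, S ≠ R → S ⊂ parent S)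
    (root : P R) (step : ∀ S ∈ Sig, S ≠ R → P (parent S) → P S) :
    ∀ S ∈ Sig, P S := by
  suffices ∀ n, ∀ S ∈ Sig, R.card - S.card = n → P S from fun S hS => this _ S hS rfl
  intro n
  induction n using Nat.strong_induction_on with
  | _ n ih =>
    intro S hS hn
    by_cases hSR : S = R
    · exact hSR ▸ root
    have hS' := hpar_mem S hS hSR
    have hcard_lt := card_lt_card (hpar_ssub S hS hSR)
    have hcard_le := card_le_card (hsub _ hS')
    exact step S hS hSR (ih _ (by omega) _ hS' rfl)

lemma parent_ne_of_ssubset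
    (hpar_ssub : ∀ S ∈ Sig, S ≠ R → S ⊂ parent S)
    (hpar_min : ∀ S ∈ Sig, S ≠ R → ∀ T ∈ Sig, S ⊂ T → parent S ⊆ T)
    {T₁ T₂ : Finset α} (h₁ : T₁ ∈ Sig) (h₁R : T₁ ≠ R)
    (h₂ : T₂ ∈ Sig) (h₂R : T₂ ≠ R) (h : T₁ ⊂ T₂) : parent T₁ ≠ parent T₂ :=
  ((hpar_min T₁ h₁ h₁R T₂ h₂ h).trans_ssubset (hpar_ssub T₂ h₂ h₂R)).ne

variable [DecidableEq α]

def children (Sig : Finset (Finset α)) (R : Finset α) (parent : Finset α → Finset α)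
    (S' : Finset α) : Finset (Finset α) :=
  Sig.filter (fun T => T ≠ R ∧ parent T = S')

lemma pairwiseDisjoint_children (hlam : IsLaminar Sig)
    (hpar_ssub : ∀ S ∈ Sig, S ≠ R → S ⊂ parent S)
    (hpar_min : ∀ S ∈ Sig, S ≠ R → ∀ T ∈ Sig, S ⊂ T → parent S ⊆ T) (S' : Finset α) :
    (children Sig R parent S' : Set (Finset α)).PairwiseDisjoint id := by
  intro T₁ hT₁ T₂ hT₂ hne
  obtain ⟨h₁, h₁R, rfl⟩ := (mem_filter.1 hT₁)
  obtain ⟨h₂, h₂R, hpar⟩ := (mem_filter.1 hT₂)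
  rcases hlam T₁ h₁ T₂ h₂ with hdisj | h | h
  · exact hdisj
  · exact absurd hpar.symm
      (parent_ne_of_ssubset hpar_ssub hpar_min h₁ h₁R h₂ h₂R (h.ssubset_of_ne hne))
  · exact absurd hpar
      (parent_ne_of_ssubset hpar_ssub hpar_min h₂ h₂R h₁ h₁R (h.ssubset_of_ne hne.symm))

lemma sum_card_children_le (hlam : IsLaminar Sig)
    (hpar_ssub : ∀ S ∈ Sig, S ≠ R → S ⊂ parent S)
    (hpar_min : ∀ S ∈ Sig, S ≠ R → ∀ T ∈ Sig, S ⊂ T → parent S ⊆ T) (S' : Finset α) :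
    ∑ T ∈ children Sig R parent S', T.card ≤ S'.card := by
  refine (card_biUnion (pairwiseDisjoint_children hlam hpar_ssub hpar_min S')).symm.trans_le
    (card_le_card (biUnion_subset.2 fun T hT => ?_))
  obtain ⟨hTSig, hTR, rfl⟩ := mem_filter.1 hT
  exact (hpar_ssub T hTSig hTR).subset

lemma lt_half_pred_card_parent (hlam : IsLaminar Sig)
    (hpar_ssub : ∀ S ∈ Sig, S ≠ R → S ⊂ parent S)
    (hpar_min : ∀ S ∈ Sig, S ≠ R → ∀ T ∈ Sig, S ⊂ T → parent S ⊆ T)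
    {γ : Finset α → ℕ} (hbound : ∀ S ∈ Sig, γ S ≤ (S.card - 1) / 2)
    {S : Finset α} (hS : S ∈ Sig) (hSR : S ≠ R) (hlt : γ S < (S.card - 1) / 2)
    (hparent : γ (parent S) = ∑ T ∈ children Sig R parent (parent S), γ T) :
    γ (parent S) < ((parent S).card - 1) / 2 := by
  have hS_child : S ∈ children Sig R parent (parent S) := mem_filter.2 ⟨hS, hSR, rfl⟩
  calc γ (parent S) = ∑ T ∈ children Sig R parent (parent S), γ T := hparent
    _ < ∑ T ∈ children Sig R parent (parent S), (T.card - 1) / 2 :=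
      sum_lt_sum (fun T hT => hbound T (mem_filter.1 hT).1) ⟨S, hS_child, hlt⟩
    _ ≤ (∑ T ∈ children Sig R parent (parent S), T.card - 1) / 2 := sum_half_pred_le _ _
    _ ≤ ((parent S).card - 1) / 2 := by
      have := sum_card_children_le hlam hpar_ssub hpar_min (parent S)
      omega

end Laminar

theorem stmt_8_general {α : Type*} [DecidableEq α] (R : Finset α) (Sig : Finset (Finset α))
    (hsub : ∀ S ∈ Sig, S ⊆ R)
    (hlam : ∀ S ∈ Sig, ∀ T ∈ Sig, Disjoint S T ∨ S ⊆ T ∨ T ⊆ S)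
    (g : ℕ)
    (parent : Finset α → Finset α)
    (hpar_mem : ∀ S ∈ Sig, S ≠ R → parent S ∈ Sig)
    (hpar_ssub : ∀ S ∈ Sig, S ≠ R → S ⊂ parent S)
    (hpar_min : ∀ S ∈ Sig, S ≠ R → ∀ T ∈ Sig, S ⊂ T → parent S ⊆ T)
    (γ : Finset α → ℕ)
    (hbound : ∀ S ∈ Sig, γ S ≤ (S.card - 1) / 2)
    (hγR : γ R = g)
    (hRcard : R.card = 2 * g + 1 ∨ R.card = 2 * g + 2)
    (hstrict : ∀ S ∈ Sig, S ≠ R → γ S < (S.card - 1) / 2 →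
      γ (parent S) = ∑ T ∈ Sig.filter (fun T => T ≠ R ∧ parent T = parent S), γ T) :
    ∀ S ∈ Sig, γ S = (S.card - 1) / 2 := by
  refine induction_from_root (P := fun S => γ S = (S.card - 1) / 2)
    hsub hpar_mem hpar_ssub (by omega) fun S hS hSR hparent => ?_
  refine (hbound S hS).antisymm (not_lt.1 fun hlt => ?_)
  exact (lt_half_pred_card_parent hlam hpar_ssub hpar_min hbound hS hSR hlt
    (hstrict S hS hSR hlt)).ne hparent

/-- abstraction of the induction in Lemma 4.2.  `Sig` is a laminar
family on `R` containing `R`; `parent S` is the smallest member of `Sig` strictly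
containing `S` (for `S ≠ R`); the children of `S'` are the members whose parent is
`S'`.  Under the listed hypotheses on `γ`, one gets `γ S = ⌊(|S|-1)/2⌋` for all
`S ∈ Sig`. -/
theorem stmt_8 {α : Type*} [DecidableEq α] (R : Finset α) (Sig : Finset (Finset α))
    (hR : R ∈ Sig)
    (hsub : ∀ S ∈ Sig, S ⊆ R)
    (hlam : ∀ S ∈ Sig, ∀ T ∈ Sig, Disjoint S T ∨ S ⊆ T ∨ T ⊆ S)
    (g : ℕ)
    (parent : Finset α → Finset α)
    (hpar_mem : ∀ S ∈ Sig, S ≠ R → parent S ∈ Sig)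
    (hpar_ssub : ∀ S ∈ Sig, S ≠ R → S ⊂ parent S)
    (hpar_min : ∀ S ∈ Sig, S ≠ R → ∀ T ∈ Sig, S ⊂ T → parent S ⊆ T)
    (γ : Finset α → ℕ)
    (hbound : ∀ S ∈ Sig, γ S ≤ (S.card - 1) / 2)
    (hγR : γ R = g)
    (hRcard : R.card = 2 * g + 1 ∨ R.card = 2 * g + 2)
    (hsup : ∀ S' ∈ Sig,
      (∑ T ∈ Sig.filter (fun T => T ≠ R ∧ parent T = S'), γ T) ≤ γ S')
    (hstrict : ∀ S ∈ Sig, S ≠ R → γ S < (S.card - 1) / 2 →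
      γ (parent S) = ∑ T ∈ Sig.filter (fun T => T ≠ R ∧ parent T = parent S), γ T) :
    ∀ S ∈ Sig, γ S = (S.card - 1) / 2 :=
  stmt_8_general R Sig hsub hlam g parent hpar_mem hpar_ssub hpar_min γ hbound hγR hRcard hstrict
end

section
/- Let Σ be a laminar family of proper clusters on a finite set R with |R| ∈ {2g+1, 2g+2}, with rational depths d_S satisfying d_T = d_R + Σ_{T ⊆ S ≠ R} δ_S, and let s₀,…,s_{g-1} ∈ Σ with γ(S) := #{i : s_i ⊆ S} = ⌊(|S|-1)/2⌋ for all S ∈ Σ. Set e_i = ν_{s_i}/2 − Σ_{j=0}^{i} d_{s_j ∧ s_i}, where ν_S = v(c_f) + d_R|R| + Σ_{S ⊆ S' ≠ R} δ_{S'}|S'|. Then 8·Σ_{i=0}^{g-1} e_i = 4g·v(c_f) + Σ_{|S| even, S≠R} δ_S(|S|-2)|S| + Σ_{|S| odd, S≠R} δ_S(|S|-1)² + d_R·((|R|-2)|R| if |R|=2g+2, else (|R|-1)²). -/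
/-- Claim 2 in the proof of Theorem 4.1: with depths
`d_T = d_R + Σ_{T ⊆ S ≠ R} δ_S`, `ν_S = v(c_f) + d_R|R| + Σ_{S ⊆ S' ≠ R} δ_{S'}|S'|`,
a sequence `s₀,…,s_{g-1}` of clusters with `γ(S) = #{i : s_i ⊆ S} = ⌊(|S|-1)/2⌋`
for all clusters `S`, and `e_i = ν_{s_i}/2 − Σ_{j ≤ i} d_{s_j ∧ s_i}`, one has
`8·Σ e_i = 4g·v(c_f) + Σ_{|S| even, S≠R} δ_S(|S|-2)|S| +
Σ_{|S| odd, S≠R} δ_S(|S|-1)² + d_R·((|R|-2)|R|` or `(|R|-1)²)`. -/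
theorem stmt_12 {α : Type*} [DecidableEq α] (g : ℕ) (hg : 1 ≤ g)
    (R : Finset α) (Sig : Finset (Finset α)) (hR : R ∈ Sig)
    (hsub : ∀ S ∈ Sig, S ⊆ R)
    (hcard2 : ∀ S ∈ Sig, 2 ≤ S.card)
    (hlam : ∀ S ∈ Sig, ∀ T ∈ Sig, Disjoint S T ∨ S ⊆ T ∨ T ⊆ S)
    (hRcard : R.card = 2 * g + 2 ∨ R.card = 2 * g + 1)
    (δ : Finset α → ℚ) (dR vcf : ℚ)
    (d : Finset α → ℚ)
    (hd : ∀ T : Finset α, d T = dR + ∑ S ∈ Sig.filter (fun S => S ≠ R ∧ T ⊆ S), δ S)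
    (ν : Finset α → ℚ)
    (hν : ∀ S : Finset α, ν S = vcf + dR * R.card +
      ∑ S' ∈ Sig.filter (fun S' => S' ≠ R ∧ S ⊆ S'), δ S' * S'.card)
    (s : Fin g → Finset α) (hs : ∀ i, s i ∈ Sig)
    (join : Finset α → Finset α → Finset α)
    (hjoin_mem : ∀ S ∈ Sig, ∀ T ∈ Sig, join S T ∈ Sig)
    (hjoin_sub : ∀ S ∈ Sig, ∀ T ∈ Sig, S ⊆ join S T ∧ T ⊆ join S T)
    (hjoin_min : ∀ S ∈ Sig, ∀ T ∈ Sig, ∀ U ∈ Sig, S ⊆ U → T ⊆ U → join S T ⊆ U)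
    (hγ : ∀ S ∈ Sig,
      (Finset.univ.filter (fun i : Fin g => s i ⊆ S)).card = (S.card - 1) / 2)
    (e : Fin g → ℚ)
    (he : ∀ i : Fin g, e i = ν (s i) / 2 - ∑ j ∈ Finset.Iic i, d (join (s j) (s i))) :
    8 * ∑ i, e i =
      4 * g * vcf
      + ∑ S ∈ Sig.filter (fun S => S ≠ R ∧ Even S.card),
          δ S * ((S.card : ℚ) - 2) * S.card
      + ∑ S ∈ Sig.filter (fun S => S ≠ R ∧ Odd S.card),
          δ S * ((S.card : ℚ) - 1) ^ 2
      + dR * (if R.card = 2 * g + 2 then ((R.card : ℚ) - 2) * R.card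
              else ((R.card : ℚ) - 1) ^ 2) := by
  classical
  set F := Sig.filter (fun S => S ≠ R) with hFdef
  set γ : Finset α → ℕ := fun S => (Finset.univ.filter (fun i : Fin g => s i ⊆ S)).card
    with hγdef
  have hγ' : ∀ S ∈ Sig, γ S = (S.card - 1) / 2 := fun S hS => hγ S hS
  have hγfold : ∀ S : Finset α,
      ((Finset.univ.filter (fun i : Fin g => s i ⊆ S)).card : ℚ) = (γ S : ℚ) := fun S => rfl
  have hjoinsub : ∀ (i j : Fin g), ∀ S ∈ Sig,
      (join (s j) (s i) ⊆ S ↔ s j ⊆ S ∧ s i ⊆ S) := by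
    intro i j S hS
    constructor
    · intro h
      exact ⟨((hjoin_sub _ (hs j) _ (hs i)).1).trans h,
        ((hjoin_sub _ (hs j) _ (hs i)).2).trans h⟩
    · rintro ⟨h1, h2⟩
      exact hjoin_min _ (hs j) _ (hs i) S hS h1 h2
  have hA : ∀ S : Finset α, (∑ i : Fin g, if s i ⊆ S then (1:ℚ) else 0) = (γ S : ℚ) := by
    intro S
    rw [Finset.sum_boole, hγfold]
  -- pair counting lemma
  have hpair : ∀ S : Finset α,
      2 * (∑ i : Fin g, ∑ j ∈ Finset.Iic i, if s j ⊆ S ∧ s i ⊆ S then (1:ℚ) else 0)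
        = (γ S : ℚ)^2 + (γ S : ℚ) := by
    intro S
    set a : Fin g → ℚ := fun k => if s k ⊆ S then 1 else 0 with hadef
    have hIic : ∀ i : Fin g, Finset.univ.filter (fun j => j ≤ i) = Finset.Iic i := by
      intro i; ext j; simp
    have hre : ∀ i : Fin g,
        (∑ j ∈ Finset.Iic i, if s j ⊆ S ∧ s i ⊆ S then (1:ℚ) else 0)
        = ∑ j : Fin g, if j ≤ i then a j * a i else 0 := by
      intro i
      rw [← hIic i, Finset.sum_filter]
      refine Finset.sum_congr rfl fun j _ => ?_
      by_cases h : j ≤ i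
      · rw [if_pos h, if_pos h]
        by_cases h1 : s j ⊆ S <;> by_cases h2 : s i ⊆ S <;> simp [hadef, h1, h2]
      · rw [if_neg h, if_neg h]
    have hsym : (∑ i : Fin g, ∑ j : Fin g, if i ≤ j then a j * a i else 0)
        = ∑ i : Fin g, ∑ j : Fin g, if j ≤ i then a j * a i else 0 := by
      rw [Finset.sum_comm]
      refine Finset.sum_congr rfl fun i _ => Finset.sum_congr rfl fun j _ => ?_
      by_cases h : j ≤ i <;> simp [h, mul_comm]
    have key : ∀ (i j : Fin g) (x : ℚ),
        ((if j ≤ i then x else 0) + (if i ≤ j then x else 0)) = x + (if j = i then x else 0) := by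
      intro i j x
      rcases lt_trichotomy i j with h | h | h
      · simp [not_le.mpr h, h.le, h.ne']
      · simp [h]
      · simp [not_le.mpr h, h.le, h.ne]
    calc 2 * (∑ i : Fin g, ∑ j ∈ Finset.Iic i, if s j ⊆ S ∧ s i ⊆ S then (1:ℚ) else 0)
        = (∑ i : Fin g, ∑ j : Fin g, if j ≤ i then a j * a i else 0)
          + (∑ i : Fin g, ∑ j : Fin g, if i ≤ j then a j * a i else 0) := by
          simp only [hre]; rw [hsym]; ring
      _ = ∑ i : Fin g, ∑ j : Fin g, (a j * a i + if j = i then a j * a i else 0) := by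
          rw [← Finset.sum_add_distrib]
          refine Finset.sum_congr rfl fun i _ => ?_
          rw [← Finset.sum_add_distrib]
          exact Finset.sum_congr rfl fun j _ => key i j (a j * a i)
      _ = (∑ i : Fin g, a i) * (∑ j : Fin g, a j) + ∑ i : Fin g, a i * a i := by
          rw [Finset.sum_mul_sum, ← Finset.sum_add_distrib]
          refine Finset.sum_congr rfl fun i _ => ?_
          rw [Finset.sum_add_distrib]
          congr 1
          · exact Finset.sum_congr rfl fun j _ => mul_comm _ _
          · rw [Finset.sum_ite_eq' Finset.univ i fun j => a j * a i]
            simp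
      _ = (γ S : ℚ)^2 + (γ S : ℚ) := by
          have h1 : (∑ i : Fin g, a i) = (γ S : ℚ) := hA S
          have h2 : (∑ i : Fin g, a i * a i) = (γ S : ℚ) := by
            rw [← hA S]
            refine Finset.sum_congr rfl fun i _ => ?_
            by_cases h : s i ⊆ S <;> simp [hadef, h]
          rw [h1, h2]; ring
  -- sum of ν
  have hν' : (∑ i, ν (s i))
      = g * (vcf + dR * R.card) + ∑ S ∈ F, δ S * S.card * (γ S : ℚ) := by
    have h1 : ∀ i : Fin g, ν (s i)
        = (vcf + dR * R.card) + ∑ S' ∈ F, (if s i ⊆ S' then δ S' * S'.card else 0) := by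
      intro i
      rw [hν]
      have h2 : Sig.filter (fun S' => S' ≠ R ∧ s i ⊆ S') = F.filter (fun S' => s i ⊆ S') := by
        rw [hFdef, Finset.filter_filter]
      rw [h2, Finset.sum_filter]
    simp only [h1]
    rw [Finset.sum_add_distrib, Finset.sum_const, Finset.card_univ, Fintype.card_fin,
      nsmul_eq_mul, Finset.sum_comm]
    congr 1
    refine Finset.sum_congr rfl fun S hS => ?_
    rw [← Finset.sum_filter, Finset.sum_const, nsmul_eq_mul, hγfold]
    ring
  -- sum of d over pairs
  have hd3 : (∑ i : Fin g, ∑ j ∈ Finset.Iic i, d (join (s j) (s i)))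
      = (∑ i : Fin g, ∑ j ∈ Finset.Iic i, if s j ⊆ R ∧ s i ⊆ R then (1:ℚ) else 0) * dR
        + ∑ S ∈ F, δ S *
          (∑ i : Fin g, ∑ j ∈ Finset.Iic i, if s j ⊆ S ∧ s i ⊆ S then (1:ℚ) else 0) := by
    have hd2 : ∀ i j : Fin g, d (join (s j) (s i))
        = dR + ∑ S ∈ F, (if s j ⊆ S ∧ s i ⊆ S then δ S else 0) := by
      intro i j
      rw [hd]
      congr 1
      have h2 : Sig.filter (fun S => S ≠ R ∧ join (s j) (s i) ⊆ S)
          = F.filter (fun S => s j ⊆ S ∧ s i ⊆ S) := by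
        rw [hFdef, Finset.filter_filter]
        exact Finset.filter_congr fun S hS => by
          simp only [hjoinsub i j S hS]
      rw [h2, Finset.sum_filter]
    simp only [hd2]
    have hsw : ∀ i : Fin g,
        (∑ j ∈ Finset.Iic i, ∑ S ∈ F, (if s j ⊆ S ∧ s i ⊆ S then δ S else 0))
        = ∑ S ∈ F, ∑ j ∈ Finset.Iic i, (if s j ⊆ S ∧ s i ⊆ S then δ S else 0) :=
      fun i => Finset.sum_comm
    calc (∑ i : Fin g, ∑ j ∈ Finset.Iic i,
            (dR + ∑ S ∈ F, (if s j ⊆ S ∧ s i ⊆ S then δ S else 0)))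
        = (∑ i : Fin g, ∑ j ∈ Finset.Iic i, (1:ℚ)) * dR
          + ∑ i : Fin g, ∑ S ∈ F, ∑ j ∈ Finset.Iic i,
              (if s j ⊆ S ∧ s i ⊆ S then δ S else 0) := by
          rw [Finset.sum_mul, ← Finset.sum_add_distrib]
          refine Finset.sum_congr rfl fun i _ => ?_
          rw [← hsw i, Finset.sum_mul, ← Finset.sum_add_distrib]
          exact Finset.sum_congr rfl fun j _ => by ring
      _ = _ := by
          rw [Finset.sum_comm]
          congr 1
          · congr 1
            refine Finset.sum_congr rfl fun i _ => Finset.sum_congr rfl fun j _ => ?_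
            rw [if_pos ⟨hsub _ (hs j), hsub _ (hs i)⟩]
          · refine Finset.sum_congr rfl fun S _ => ?_
            rw [Finset.mul_sum]
            refine Finset.sum_congr rfl fun i _ => ?_
            rw [Finset.mul_sum]
            refine Finset.sum_congr rfl fun j _ => ?_
            rw [mul_boole]
  -- gamma of R
  have hγR : γ R = g := by
    have h1 := hγ' R hR
    rcases hRcard with h | h <;> omega
  have hPR : 2 * (∑ i : Fin g, ∑ j ∈ Finset.Iic i, if s j ⊆ R ∧ s i ⊆ R then (1:ℚ) else 0)
      = (g:ℚ)^2 + (g:ℚ) := by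
    rw [hpair R, hγR]
  -- parity cast facts
  have hcast : ∀ S ∈ Sig, (Even S.card → (S.card:ℚ) = 2*(γ S:ℚ) + 2)
      ∧ (¬ Even S.card → (S.card:ℚ) = 2*(γ S:ℚ) + 1) := by
    intro S hS
    have h1 := hγ' S hS
    have h2 := hcard2 S hS
    constructor
    · intro he
      have he' := Nat.even_iff.mp he
      have h3 : S.card = 2 * γ S + 2 := by omega
      exact_mod_cast h3
    · intro ho
      have ho' := Nat.not_even_iff.mp ho
      have h3 : S.card = 2 * γ S + 1 := by omega
      exact_mod_cast h3
  -- main reduction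
  have main : 8 * ∑ i, e i = 4 * (∑ i, ν (s i))
      - 8 * (∑ i : Fin g, ∑ j ∈ Finset.Iic i, d (join (s j) (s i))) := by
    simp only [he]
    rw [Finset.sum_sub_distrib, ← Finset.sum_div]
    ring
  have hcomb : (8:ℚ) * ∑ S ∈ F, δ S *
      (∑ i : Fin g, ∑ j ∈ Finset.Iic i, if s j ⊆ S ∧ s i ⊆ S then (1:ℚ) else 0)
      = ∑ S ∈ F, δ S * (4*(γ S:ℚ)^2 + 4*(γ S:ℚ)) := by
    rw [Finset.mul_sum]
    exact Finset.sum_congr rfl fun S _ => by linear_combination 4 * δ S * hpair S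
  have hlin : (∑ S ∈ F, δ S * (4*(S.card:ℚ)*(γ S:ℚ) - 4*(γ S:ℚ)^2 - 4*(γ S:ℚ)))
      = 4 * (∑ S ∈ F, δ S * S.card * (γ S : ℚ))
        - ∑ S ∈ F, δ S * (4*(γ S:ℚ)^2 + 4*(γ S:ℚ)) := by
    rw [Finset.mul_sum, ← Finset.sum_sub_distrib]
    exact Finset.sum_congr rfl fun S _ => by ring
  have hoe : ∀ n : ℕ, (¬ Even n) ↔ Odd n := fun n => Nat.not_even_iff.trans Nat.odd_iff.symm
  have hEfin : (∑ S ∈ F, δ S * (4*(S.card:ℚ)*(γ S:ℚ) - 4*(γ S:ℚ)^2 - 4*(γ S:ℚ)))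
      = (∑ S ∈ Sig.filter (fun S => S ≠ R ∧ Even S.card), δ S * ((S.card:ℚ) - 2) * S.card)
        + ∑ S ∈ Sig.filter (fun S => S ≠ R ∧ Odd S.card), δ S * ((S.card:ℚ) - 1)^2 := by
    rw [← Finset.sum_filter_add_sum_filter_not F (fun S => Even S.card)]
    congr 1
    · rw [hFdef, Finset.filter_filter]
      refine Finset.sum_congr rfl fun S hS => ?_
      obtain ⟨hSig, hne, hev⟩ := Finset.mem_filter.mp hS
      have hc := (hcast S hSig).1 hev
      rw [hc]; ring
    · have heq : F.filter (fun S => ¬ Even S.card)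
          = Sig.filter (fun S => S ≠ R ∧ Odd S.card) := by
        rw [hFdef, Finset.filter_filter]
        exact Finset.filter_congr fun S _ => by
          simp only [hoe S.card]
      rw [heq]
      refine Finset.sum_congr rfl fun S hS => ?_
      obtain ⟨hSig, hne, hodd⟩ := Finset.mem_filter.mp hS
      have hc := (hcast S hSig).2 ((hoe S.card).mpr hodd)
      rw [hc]; ring
  rw [main, hd3, hν']
  rcases hRcard with h | h
  · rw [if_pos h]
    have hcR : (R.card:ℚ) = 2*(g:ℚ) + 2 := by rw [h]; push_cast; ring
    rw [hcR]
    linear_combination (-1:ℚ) * hlin - hcomb + hEfin - 4*dR*hPR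
  · rw [if_neg (by omega)]
    have hcR : (R.card:ℚ) = 2*(g:ℚ) + 1 := by rw [h]; push_cast; ring
    rw [hcR]
    linear_combination (-1:ℚ) * hlin - hcomb + hEfin - 4*dR*hPR
end
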